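/- arXiv:2503.06428 — 2 statements merged into one kernel-verified Lean document; each statement's English description precedes it below -/
import Mathlib

section
/- Let Z₁,…,Z_{n+1} be exchangeable real-valued random variables with almost surely distinct values. Let q be the ⌈(1−ε)(n+1)⌉-th smallest value among Z₁,…,Z_n. Then Pr(Z_{n+1} ≤ q) ≥ 1 − ε. -/
/-! With almost surely distinct values, the ranks of the `n + 1` scores form a permutation of
`{1, …, n + 1}`, so the ranks `≤ k` are held by exactly `k` of them; by exchangeability every
score is equally likely to hold one, so the test score has rank `≤ k` with probability
`k / (n + 1) ≥ 1 - ε`. A test score of rank `≤ k` has fewer than `k` calibration scores below it,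
hence lies below their `k`-th smallest value `q`. -/

open MeasureTheory Finset
open scoped ENNReal

namespace SplitConformal

section Rank

variable {ι α : Type*} [Fintype ι] [LinearOrder α]

def rank (v : ι → α) (j : ι) : ℕ := #{i | v i ≤ v j}

theorem rank_comp_perm (v : ι → α) (σ : Equiv.Perm ι) (j : ι) :
    rank (v ∘ σ) j = rank v (σ j) :=
  card_equiv σ (by simp)

theorem rank_lt_rank {v : ι → α} {j j' : ι} (h : v j < v j') : rank v j < rank v j' := by
  refine card_lt_card <| (ssubset_iff_of_subset ?_).2 ⟨j', by simp, by simpa using h⟩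
  exact monotone_filter_right _ fun i _ hi => hi.trans h.le

theorem rank_injective {v : ι → α} (hv : Function.Injective v) : Function.Injective (rank v) := by
  intro j j' h
  by_contra hne
  rcases (hv.ne hne).lt_or_gt with hlt | hlt
  · exact (rank_lt_rank hlt).ne h
  · exact (rank_lt_rank hlt).ne' h

theorem rank_mem_Icc (v : ι → α) (j : ι) : rank v j ∈ Icc 1 (Fintype.card ι) :=
  mem_Icc.2 ⟨card_pos.2 ⟨j, by simp⟩, card_le_univ _⟩

theorem image_rank {v : ι → α} (hv : Function.Injective v) :
    univ.image (rank v) = Icc 1 (Fintype.card ι) :=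
  eq_of_subset_of_card_le (image_subset_iff.2 fun j _ => rank_mem_Icc v j)
    (by simp [card_image_of_injective _ (rank_injective hv)])

theorem card_rank_le {v : ι → α} (hv : Function.Injective v) {k : ℕ}
    (hk : k ≤ Fintype.card ι) : #{j | rank v j ≤ k} = k := by
  have hIcc : {r ∈ Icc 1 (Fintype.card ι) | r ≤ k} = Icc 1 k := by
    ext r
    simp only [mem_filter, mem_Icc]
    omega
  rw [← card_image_of_injective _ (rank_injective hv), ← filter_image (p := (· ≤ k)),
    image_rank hv, hIcc, Nat.card_Icc, Nat.add_sub_cancel]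

theorem rank_last {n : ℕ} (w : Fin (n + 1) → α) :
    rank w (Fin.last n) = #{i : Fin n | w i.castSucc ≤ w (Fin.last n)} + 1 := by
  simp only [rank, card_filter, Fin.sum_univ_castSucc]
  simp

end Rank

theorem le_sInf_of_card_lt {ι α : Type*} [Fintype ι] [ConditionallyCompleteLinearOrder α]
    {v : ι → α} {y : α} {k : ℕ} (hk : k ≤ Fintype.card ι) (hy : #{i | v i ≤ y} < k) :
    y ≤ sInf {x | k ≤ #{i | v i ≤ x}} := by
  obtain ⟨M, hM⟩ := ((Set.finite_range v).insert y).bddAbove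
  refine le_csInf ⟨M, ?_⟩ fun x hx => ?_
  · have hall : #{i | v i ≤ M} = Fintype.card ι := by
      rw [filter_true_of_mem fun i _ => hM (Set.mem_insert_of_mem _ ⟨i, rfl⟩), card_univ]
    simpa [hall] using hk
  · by_contra! hxy
    have : #{i | v i ≤ x} ≤ #{i | v i ≤ y} :=
      card_le_card <| monotone_filter_right _ fun i _ hi => hi.trans hxy.le
    exact absurd (hx.trans this) (not_le.2 hy)

section Exchangeable

variable {Ω ι : Type*} [MeasurableSpace Ω] [Fintype ι] {P : Measure Ω} {X : Ω → ι → ℝ}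

theorem measurable_rank (j : ι) : Measurable fun v : ι → ℝ => rank v j := by
  simp_rw [rank, card_filter]
  exact Finset.measurable_sum _ fun i _ => Measurable.ite
    (measurableSet_le (measurable_pi_apply i) (measurable_pi_apply j)) measurable_const
    measurable_const

theorem measure_rank_le_eq_of_exchangeable (hX : Measurable X)
    (hexch : ∀ σ : Equiv.Perm ι, P.map (fun ω => X ω ∘ σ) = P.map X) (k : ℕ) (j j' : ι) :
    P {ω | rank (X ω) j ≤ k} = P {ω | rank (X ω) j' ≤ k} := by
  classical
  let σ := Equiv.swap j j'
  have hs : MeasurableSet {v : ι → ℝ | rank v j ≤ k} := measurable_rank j measurableSet_Iic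
  have hσ : Measurable fun ω => X ω ∘ σ :=
    measurable_pi_lambda _ fun i => (measurable_pi_apply (σ i)).comp hX
  calc P {ω | rank (X ω) j ≤ k} = P.map X {v | rank v j ≤ k} := (Measure.map_apply hX hs).symm
    _ = P.map (fun ω => X ω ∘ σ) {v | rank v j ≤ k} := by rw [hexch]
    _ = P {ω | rank (X ω) j' ≤ k} := by
      rw [Measure.map_apply hσ hs]
      simp only [Set.preimage_ofPred_eq, rank_comp_perm, σ, Equiv.swap_apply_left]

theorem sum_measure_rank_le [IsProbabilityMeasure P] (hX : Measurable X)
    (hinj : ∀ᵐ ω ∂P, Function.Injective (X ω)) {k : ℕ} (hk : k ≤ Fintype.card ι) :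
    ∑ j, P {ω | rank (X ω) j ≤ k} = k := by
  have hmeas (j : ι) : MeasurableSet {ω | rank (X ω) j ≤ k} :=
    (measurable_rank j).comp hX measurableSet_Iic
  calc ∑ j, P {ω | rank (X ω) j ≤ k}
      = ∫⁻ ω, ∑ j, {ω | rank (X ω) j ≤ k}.indicator 1 ω ∂P := by
        rw [lintegral_finsetSum _ fun j _ => measurable_one.indicator (hmeas j)]
        simp_rw [lintegral_indicator_one (hmeas _)]
    _ = ∫⁻ _, (k : ℝ≥0∞) ∂P := by
        refine lintegral_congr_ae (hinj.mono fun ω hω => ?_)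
        simp only [Set.indicator_apply, Set.mem_ofPred_eq, Pi.one_apply]
        rw [← natCast_card_filter, card_rank_le hω hk]
    _ = k := by simp

theorem measure_rank_le_of_exchangeable [IsProbabilityMeasure P] (hX : Measurable X)
    (hexch : ∀ σ : Equiv.Perm ι, P.map (fun ω => X ω ∘ σ) = P.map X)
    (hinj : ∀ᵐ ω ∂P, Function.Injective (X ω)) (j : ι) {k : ℕ} (hk : k ≤ Fintype.card ι) :
    P {ω | rank (X ω) j ≤ k} = k / Fintype.card ι := by
  have hsum := sum_measure_rank_le hX hinj hk
  simp_rw [measure_rank_le_eq_of_exchangeable hX hexch k _ j, sum_const, card_univ,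
    nsmul_eq_mul] at hsum
  have hcard : (Fintype.card ι : ℝ≥0∞) ≠ 0 := by simpa using (Fintype.card_pos_iff.2 ⟨j⟩).ne'
  exact (ENNReal.eq_div_iff hcard (ENNReal.natCast_ne_top _)).2 hsum

end Exchangeable

theorem ofReal_le_natCeil_mul_div (x : ℝ) {m : ℕ} (hm : m ≠ 0) :
    ENNReal.ofReal x ≤ ⌈x * m⌉₊ / m := by
  rw [ENNReal.le_div_iff_mul_le (Or.inl (by simpa)) (Or.inl (ENNReal.natCast_ne_top m)),
    ← ENNReal.ofReal_natCast m, ← ENNReal.ofReal_mul' m.cast_nonneg, ← ENNReal.ofReal_natCast]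
  exact ENNReal.ofReal_le_ofReal (Nat.le_ceil _)

end SplitConformal

open SplitConformal in
theorem split_conformal_coverage_general {Ω : Type*} [MeasurableSpace Ω]
    (P : Measure Ω) [IsProbabilityMeasure P]
    (n : ℕ) (ε : ℝ)
    (Z : Fin (n + 1) → Ω → ℝ) (hZ : ∀ i, Measurable (Z i))
    (hexch : ∀ σ : Equiv.Perm (Fin (n + 1)),
      P.map (fun ω => fun i => Z (σ i) ω) = P.map (fun ω => fun i => Z i ω))
    (hdistinct : ∀ᵐ ω ∂P, Function.Injective (fun i => Z i ω))
    (k : ℕ) (hk : k = ⌈(1 - ε) * (n + 1)⌉₊) (hkn : k ≤ n)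
    (q : Ω → ℝ)
    (hq : ∀ ω, q ω = sInf {x : ℝ |
      k ≤ (Finset.univ.filter (fun i : Fin n => Z i.castSucc ω ≤ x)).card}) :
    ENNReal.ofReal (1 - ε) ≤ P {ω | Z (Fin.last n) ω ≤ q ω} := by
  let X : Ω → Fin (n + 1) → ℝ := fun ω i => Z i ω
  have hrank : P {ω | rank (X ω) (Fin.last n) ≤ k} = k / (n + 1) := by
    simpa using measure_rank_le_of_exchangeable (measurable_pi_lambda X hZ) hexch hdistinct
      (Fin.last n) (by simpa using hkn.trans n.le_succ)
  have hcover : {ω | rank (X ω) (Fin.last n) ≤ k} ⊆ {ω | Z (Fin.last n) ω ≤ q ω} := by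
    intro ω hω
    rw [Set.mem_ofPred_eq, rank_last] at hω
    rw [Set.mem_ofPred_eq, hq]
    exact le_sInf_of_card_lt (by simpa using hkn) (Nat.lt_of_succ_le hω)
  have hceil := ofReal_le_natCeil_mul_div (1 - ε) n.succ_ne_zero
  push_cast at hceil
  calc ENNReal.ofReal (1 - ε) ≤ k / (n + 1) := hk ▸ hceil
    _ = P {ω | rank (X ω) (Fin.last n) ≤ k} := hrank.symm
    _ ≤ P {ω | Z (Fin.last n) ω ≤ q ω} := measure_mono hcover

/-- Split conformal prediction coverage guarantee: if `Z₁,…,Z_{n+1}` are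
exchangeable with almost surely distinct values and `q` is the
`⌈(1−ε)(n+1)⌉`-th smallest of `Z₁,…,Z_n`, then `Pr(Z_{n+1} ≤ q) ≥ 1 − ε`. -/
theorem split_conformal_coverage {Ω : Type*} [MeasurableSpace Ω]
    (P : Measure Ω) [IsProbabilityMeasure P]
    (n : ℕ) (hn : 1 ≤ n) (ε : ℝ) (hε : ε ∈ Set.Ioo (0 : ℝ) 1)
    (Z : Fin (n + 1) → Ω → ℝ) (hZ : ∀ i, Measurable (Z i))
    (hexch : ∀ σ : Equiv.Perm (Fin (n + 1)),
      P.map (fun ω => fun i => Z (σ i) ω) = P.map (fun ω => fun i => Z i ω))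
    (hdistinct : ∀ᵐ ω ∂P, Function.Injective (fun i => Z i ω))
    (k : ℕ) (hk : k = ⌈(1 - ε) * (n + 1)⌉₊) (hkn : k ≤ n)
    (q : Ω → ℝ)
    (hq : ∀ ω, q ω = sInf {x : ℝ |
      k ≤ (Finset.univ.filter (fun i : Fin n => Z i.castSucc ω ≤ x)).card}) :
    ENNReal.ofReal (1 - ε) ≤ P {ω | Z (Fin.last n) ω ≤ q ω} :=
  split_conformal_coverage_general P n ε Z hZ hexch hdistinct k hk hkn q hq
end

section
/- If (X₁,…,X_{n+1}) are exchangeable random variables and I₁,…,I_{n+1} are obtained by applying a fixed measurable function g to each X_k (I_k = g(X_k)), then conditioned on the multiset of values {I_k} and on any fixed assignment of indices to pools {k : I_k = c}, the variables within each pool remain exchangeable. -/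
open MeasureTheory ProbabilityTheory

/-- Partitioning exchangeable data by a deterministic discrete label preserves
exchangeability within each pool: if `(X₁,…,X_{n+1})` are exchangeable,
`I_k = g(X_k)` for a fixed measurable `g` into a countable label set, then,
conditioned on a fixed assignment `ι` of labels to indices, the joint law is
invariant under any permutation preserving the label assignment (i.e., any
permutation acting within the pools `{k : I_k = c}`). -/
theorem calibration_pools_exchangeable {Ω α β : Type*}
    [MeasurableSpace Ω] [MeasurableSpace α] [MeasurableSpace β]
    [Countable β] [MeasurableSingletonClass β]
    (P : Measure Ω) [IsProbabilityMeasure P]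
    (n : ℕ) (X : Fin (n + 1) → Ω → α) (hX : ∀ k, Measurable (X k))
    (hexch : ∀ σ : Equiv.Perm (Fin (n + 1)),
      P.map (fun ω => fun k => X (σ k) ω) = P.map (fun ω => fun k => X k ω))
    (g : α → β) (hg : Measurable g)
    (ι : Fin (n + 1) → β)
    (E : Set Ω) (hE : E = {ω | ∀ k, g (X k ω) = ι k})
    (σ : Equiv.Perm (Fin (n + 1))) (hσ : ∀ k, ι (σ k) = ι k) :
    (P[|E]).map (fun ω => fun k => X (σ k) ω) =
      (P[|E]).map (fun ω => fun k => X k ω) := by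
  have hY : Measurable (fun ω => fun k => X k ω) := measurable_pi_lambda _ hX
  have hYσ : Measurable (fun ω => fun k => X (σ k) ω) :=
    measurable_pi_lambda _ (fun k => hX _)
  set S : Set (Fin (n + 1) → α) := {f | ∀ k, g (f k) = ι k} with hS
  have hSmeas : MeasurableSet S := by
    have h : S = ⋂ k, (fun f : Fin (n + 1) → α => g (f k)) ⁻¹' {ι k} := by
      ext f; simp [hS, Set.mem_iInter]
    rw [h]
    exact MeasurableSet.iInter fun k =>
      (hg.comp (measurable_pi_apply k)) (measurableSet_singleton _)
  have hEeq : E = (fun ω => fun k => X k ω) ⁻¹' S := by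
    rw [hE]; rfl
  have hEmeas : MeasurableSet E := hEeq ▸ hY hSmeas
  have hι : ∀ k, ι (σ⁻¹ k) = ι k := fun k => by
    have := hσ (σ⁻¹ k); rw [Equiv.Perm.inv_def, Equiv.apply_symm_apply] at this; exact this.symm
  have hEσ : (fun ω => fun k => X (σ k) ω) ⁻¹' S = E := by
    ext ω
    constructor
    · intro h
      rw [hE]
      intro j
      have := h (σ⁻¹ j); simp only [Equiv.Perm.inv_def, Equiv.apply_symm_apply] at this; exact this.trans (hι j)
    · intro h k
      rw [hE] at h
      simpa [hσ k] using h (σ k)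
  ext A hA
  rw [Measure.map_apply hYσ hA, Measure.map_apply hY hA,
    cond_apply hEmeas, cond_apply hEmeas]
  congr 1
  have h1 : E ∩ (fun ω => fun k => X (σ k) ω) ⁻¹' A
      = (fun ω => fun k => X (σ k) ω) ⁻¹' (S ∩ A) := by
    rw [Set.preimage_inter, hEσ]
  have h2 : E ∩ (fun ω => fun k => X k ω) ⁻¹' A
      = (fun ω => fun k => X k ω) ⁻¹' (S ∩ A) := by
    rw [Set.preimage_inter, hEeq]
  rw [h1, h2, ← Measure.map_apply hYσ (hSmeas.inter hA),
    ← Measure.map_apply hY (hSmeas.inter hA), hexch σ]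
end
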